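/- Let C(t) be a symmetric positive definite solution of Ċ(t) = −α C(t)AᵀΓ⁻¹A C(t), and suppose λ(t) > 0 with unit eigenvector v(t) satisfy C(t)v(t) = λ(t)v(t), both differentiable in t. Then λ̇(t) = −α λ(t)² ‖Av(t)‖_Γ². In particular, λ(t) ≥ λ(0)/(α‖Γ^{−1/2}A‖² λ(0) t + 1) for all t ≥ 0. -/

import Mathlib

/-!
Along the flow, `λ = v ⬝ᵥ C v`. Differentiating, the two terms carrying `v̇` vanish: `C` is
symmetric with eigenvector `v`, so both equal `λ (v ⬝ᵥ v̇)`, and `v ⬝ᵥ v̇ = 0` because `‖v‖ = 1`.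
What is left is `v ⬝ᵥ Ċ v = -α λ² ‖A v‖_Γ²`. Hence `d/dt (1/λ) = α ‖A v‖_Γ² ≤ α K`, and integrating
this bound on `[0, t]` gives the lower bound on `λ`.
-/

open Matrix

section Derivatives

variable {ι κ : Type*} [Fintype ι] {t : ℝ}

theorem HasDerivAt.dotProduct {u w : ℝ → ι → ℝ} {u' w' : ι → ℝ}
    (hu : HasDerivAt u u' t) (hw : HasDerivAt w w' t) :
    HasDerivAt (fun s => u s ⬝ᵥ w s) (u' ⬝ᵥ w t + u t ⬝ᵥ w') t := by
  have := HasDerivAt.fun_sum fun i (_ : i ∈ Finset.univ) =>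
    (hasDerivAt_pi.1 hu i).fun_mul (hasDerivAt_pi.1 hw i)
  rwa [Finset.sum_add_distrib] at this

theorem HasDerivAt.matrix_mulVec {M : ℝ → Matrix κ ι ℝ} {M' : Matrix κ ι ℝ}
    {v : ℝ → ι → ℝ} {v' : ι → ℝ}
    (hM : ∀ i j, HasDerivAt (fun s => M s i j) (M' i j) t) (hv : HasDerivAt v v' t) :
    HasDerivAt (fun s => M s *ᵥ v s) (M' *ᵥ v t + M t *ᵥ v') t :=
  hasDerivAt_pi.2 fun i => (hasDerivAt_pi.2 (hM i)).dotProduct hv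

theorem hasDerivAt_eigenvalue_of_isSymm {C : ℝ → Matrix ι ι ℝ} {C' : Matrix ι ι ℝ}
    {lam : ℝ → ℝ} {v : ℝ → ι → ℝ} {v' : ι → ℝ}
    (hsymm : (C t).IsSymm) (hC : ∀ i j, HasDerivAt (fun s => C s i j) (C' i j) t)
    (hv : HasDerivAt v v' t) (heig : ∀ s, C s *ᵥ v s = lam s • v s)
    (hunit : ∀ s, v s ⬝ᵥ v s = 1) :
    HasDerivAt lam (v t ⬝ᵥ (C' *ᵥ v t)) t := by
  have hlam : (fun s => v s ⬝ᵥ (C s *ᵥ v s)) = lam := funext fun s => by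
    rw [heig, dotProduct_smul, hunit, smul_eq_mul, mul_one]
  have horth : v t ⬝ᵥ v' = 0 := by
    have h := (hv.dotProduct hv).unique (by simpa only [hunit] using hasDerivAt_const t (1 : ℝ))
    rw [dotProduct_comm] at h
    linarith
  have hleft : v' ⬝ᵥ (C t *ᵥ v t) = 0 := by
    rw [heig, dotProduct_smul, dotProduct_comm, horth, smul_zero]
  have hright : v t ⬝ᵥ (C t *ᵥ v') = 0 := by
    rw [dotProduct_mulVec, ← mulVec_transpose, hsymm.eq, heig, smul_dotProduct, horth, smul_zero]
  have h := hv.dotProduct (HasDerivAt.matrix_mulVec hC hv)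
  rwa [hlam, dotProduct_add, hleft, hright, zero_add, add_zero] at h

end Derivatives

theorem dotProduct_mul_mul_mulVec_of_isSymm {ι R : Type*} [Fintype ι] [CommSemiring R]
    {C M : Matrix ι ι R} {v : ι → R} {μ : R} (hsymm : C.IsSymm) (heig : C *ᵥ v = μ • v) :
    v ⬝ᵥ ((C * M * C) *ᵥ v) = μ ^ 2 * (v ⬝ᵥ (M *ᵥ v)) := by
  rw [← mulVec_mulVec, ← mulVec_mulVec, heig, dotProduct_mulVec, ← mulVec_transpose, hsymm.eq,
    heig, mulVec_smul, smul_dotProduct, dotProduct_smul, smul_eq_mul, smul_eq_mul, ← mul_assoc, sq]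

theorem isCompact_setOf_dotProduct_self_eq_one (ι : Type*) [Fintype ι] :
    IsCompact {z : ι → ℝ | z ⬝ᵥ z = 1} := by
  refine (isCompact_univ_pi fun _ => isCompact_Icc (a := -1) (b := 1)).of_isClosed_subset
    (isClosed_eq (continuous_id.dotProduct continuous_id) continuous_const) fun z hz i _ => ?_
  refine abs_le.1 (abs_le_one_iff_mul_self_le_one.2 ?_)
  exact hz ▸ Finset.single_le_sum (fun j _ => mul_self_nonneg (z j)) (Finset.mem_univ i)

theorem le_sSup_of_dotProduct_self_eq_one {ι : Type*} [Fintype ι] {Q : (ι → ℝ) → ℝ}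
    (hQ : Continuous Q) {z : ι → ℝ} (hz : z ⬝ᵥ z = 1) :
    Q z ≤ sSup {r | ∃ z : ι → ℝ, z ⬝ᵥ z = 1 ∧ r = Q z} :=
  le_csSup (((isCompact_setOf_dotProduct_self_eq_one ι).image hQ).bddAbove.mono
    (by rintro _ ⟨z, hz, rfl⟩; exact ⟨z, hz, rfl⟩)) ⟨z, hz, rfl⟩

theorem div_mul_add_one_le_of_hasDerivAt {f f' : ℝ → ℝ} {k : ℝ} (hpos : ∀ t, 0 < f t)
    (hf : ∀ t, HasDerivAt f (f' t) t) (hbound : ∀ t, -(k * f t ^ 2) ≤ f' t) {t : ℝ}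
    (ht : 0 ≤ t) : f 0 / (k * f 0 * t + 1) ≤ f t := by
  have hanti : Antitone fun s => (f s)⁻¹ - k * s := by
    refine antitone_of_hasDerivAt_nonpos
      (fun s => ((hf s).fun_inv (hpos s).ne').sub ((hasDerivAt_id s).const_mul k)) fun s => ?_
    show -f' s / f s ^ 2 - k * 1 ≤ 0
    have := hbound s
    rw [mul_one, sub_nonpos, div_le_iff₀ (pow_pos (hpos s) 2)]
    linarith
  have hinv : (f t)⁻¹ ≤ (f 0)⁻¹ + k * t := by
    have := hanti ht
    simp only [mul_zero, sub_zero] at this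
    linarith
  rcases le_or_gt (k * f 0 * t + 1) 0 with hd | hd
  · exact (div_nonpos_of_nonneg_of_nonpos (hpos 0).le hd).trans (hpos t).le
  · rw [div_le_iff₀ hd]
    have := mul_le_mul_of_nonneg_left hinv (mul_pos (hpos 0) (hpos t)).le
    rw [mul_inv_cancel_right₀ (hpos t).ne', mul_add, mul_comm (f 0),
      mul_inv_cancel_right₀ (hpos 0).ne'] at this
    linarith

theorem eigenvalue_dynamics_general {n m : ℕ} (α : ℝ) (hα : 0 < α)
    (A : Matrix (Fin m) (Fin n) ℝ)
    (Γ : Matrix (Fin m) (Fin m) ℝ)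
    (C : ℝ → Matrix (Fin n) (Fin n) ℝ)
    (hCpos : ∀ t : ℝ, (C t).PosDef)
    (hC : ∀ t : ℝ, ∀ i j : Fin n,
      HasDerivAt (fun s => C s i j) ((-α • (C t * (Aᵀ * Γ⁻¹ * A) * C t)) i j) t)
    (lam : ℝ → ℝ) (v : ℝ → Fin n → ℝ)
    (hlampos : ∀ t, 0 < lam t)
    (heig : ∀ t, C t *ᵥ v t = lam t • v t)
    (hunit : ∀ t, v t ⬝ᵥ v t = 1)
    (hvdiff : ∀ i : Fin n, Differentiable ℝ (fun t => v t i))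
    -- `K = ‖Γ^{-1/2}A‖²`, the square of the operator norm:
    (K : ℝ)
    (hK : K = sSup {r : ℝ | ∃ z : Fin n → ℝ, z ⬝ᵥ z = 1 ∧
      r = (A *ᵥ z) ⬝ᵥ (Γ⁻¹ *ᵥ (A *ᵥ z))}) :
    (∀ t : ℝ,
      HasDerivAt lam (-(α * lam t ^ 2 * ((A *ᵥ v t) ⬝ᵥ (Γ⁻¹ *ᵥ (A *ᵥ v t))))) t) ∧
    (∀ t : ℝ, 0 ≤ t → lam 0 / (α * K * lam 0 * t + 1) ≤ lam t) := by
  have hsymm (t : ℝ) : (C t).IsSymm := isHermitian_iff_isSymm.1 (hCpos t).isHermitian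
  have hderiv (t : ℝ) :
      HasDerivAt lam (-(α * lam t ^ 2 * ((A *ᵥ v t) ⬝ᵥ (Γ⁻¹ *ᵥ (A *ᵥ v t))))) t := by
    have h := hasDerivAt_eigenvalue_of_isSymm (hsymm t) (hC t)
      ((differentiable_pi.2 hvdiff t).hasDerivAt) heig hunit
    rwa [smul_mulVec, dotProduct_smul, dotProduct_mul_mul_mulVec_of_isSymm (hsymm t) (heig t),
      ← mulVec_mulVec, ← mulVec_mulVec, dotProduct_transpose_mulVec, dotProduct_comm, smul_eq_mul,
      neg_mul, ← mul_assoc] at h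
  refine ⟨hderiv, fun t ht => div_mul_add_one_le_of_hasDerivAt hlampos hderiv (fun s => ?_) ht⟩
  have hQ : (A *ᵥ v s) ⬝ᵥ (Γ⁻¹ *ᵥ (A *ᵥ v s)) ≤ K := hK ▸ le_sSup_of_dotProduct_self_eq_one
    (Q := fun z => (A *ᵥ z) ⬝ᵥ (Γ⁻¹ *ᵥ (A *ᵥ z))) (by fun_prop) (hunit s)
  have := mul_le_mul_of_nonneg_left hQ (by positivity : 0 ≤ α * lam s ^ 2)
  linarith

theorem eigenvalue_dynamics {n m : ℕ} (α : ℝ) (hα : 0 < α)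
    (A : Matrix (Fin m) (Fin n) ℝ)
    (Γ : Matrix (Fin m) (Fin m) ℝ) (hΓ : Γ.PosDef)
    (C : ℝ → Matrix (Fin n) (Fin n) ℝ)
    (hCpos : ∀ t : ℝ, (C t).PosDef)
    (hC : ∀ t : ℝ, ∀ i j : Fin n,
      HasDerivAt (fun s => C s i j) ((-α • (C t * (Aᵀ * Γ⁻¹ * A) * C t)) i j) t)
    (lam : ℝ → ℝ) (v : ℝ → Fin n → ℝ)
    (hlampos : ∀ t, 0 < lam t)
    (heig : ∀ t, C t *ᵥ v t = lam t • v t)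
    (hunit : ∀ t, v t ⬝ᵥ v t = 1)
    (hlamdiff : Differentiable ℝ lam)
    (hvdiff : ∀ i : Fin n, Differentiable ℝ (fun t => v t i))
    -- `K = ‖Γ^{-1/2}A‖²`, the square of the operator norm:
    (K : ℝ)
    (hK : K = sSup {r : ℝ | ∃ z : Fin n → ℝ, z ⬝ᵥ z = 1 ∧
      r = (A *ᵥ z) ⬝ᵥ (Γ⁻¹ *ᵥ (A *ᵥ z))}) :
    (∀ t : ℝ,
      HasDerivAt lam (-(α * lam t ^ 2 * ((A *ᵥ v t) ⬝ᵥ (Γ⁻¹ *ᵥ (A *ᵥ v t))))) t) ∧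
    (∀ t : ℝ, 0 ≤ t → lam 0 / (α * K * lam 0 * t + 1) ≤ lam t) :=
  eigenvalue_dynamics_general α hα A Γ C hCpos hC lam v hlampos heig hunit hvdiff K hK
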